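/- The 2(2^k - 1)-th partial convergent of the continued fraction 1/(1 + w_1/(1 + w_2/(1 + ...))) with partial numerators given by the letters w_1, w_2, ... of the infinite paperfolding word W_∞ equals the polynomial 1 + Σ_{j=1}^{k} Π_{i=1}^{j} x_i^{2^(j-i)}. -/

import Mathlib

/-!
Both `M(W_{k+1})` and `M(reverse W_{k+1})` have the shape `foldMatrix a (±p)` with `a = X_k` and
`p = x_1^{2^k} ⋯ x_{k+1}`. Since `W_{k+2} = W_{k+1} ⬝ (x, -x) ⬝ reverse W_{k+1}`, one `2 × 2` matrix
identity turns `(a, p)` into `(a + p, p² x) = (X_{k+1}, x_1^{2^{k+1}} ⋯ x_{k+2})`, and the same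
identity with `x ↦ -x` handles the reversed word. Prepending the letter `1` multiplies by
`[[0,1],[1,1]]`, which reads off the entry `a + p = X_{k+1}` and the column sum `1`.
-/

variable {R : Type*} [CommRing R]

/-- `X k = 1 + ∑_{j=1}^k ∏_{i=1}^j x_i^{2^(j-i)}`. -/
def Xpoly (x : ℕ → R) (k : ℕ) : R :=
  1 + ∑ j ∈ Finset.Icc 1 k, ∏ i ∈ Finset.Icc 1 j, x i ^ 2 ^ (j - i)

/-- `X̃ k = 1 + ∑_{j=1}^{k-1} ∏_{i=1}^j x_i^{2^(j-i)} - ∏_{i=1}^k x_i^{2^(k-i)}`. -/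
def Xtilde (x : ℕ → R) (k : ℕ) : R :=
  1 + ∑ j ∈ Finset.Icc 1 (k - 1), ∏ i ∈ Finset.Icc 1 j, x i ^ 2 ^ (j - i)
    - ∏ i ∈ Finset.Icc 1 k, x i ^ 2 ^ (k - i)

/-- The paperfolding words: `W 1 = (-x₁, x₁)`, `W (k+1) = W k ⬝ (x_{k+1}, -x_{k+1}) ⬝ reverse (W k)`. -/
def Wword (x : ℕ → R) : ℕ → List R
  | 0 => []
  | 1 => [-x 1, x 1]
  | (k + 2) => Wword x (k + 1) ++ [x (k + 2), -x (k + 2)] ++ (Wword x (k + 1)).reverse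

/-- `M(U)`: the ordered product of the matrices `[[0,u],[1,1]]` over the letters `u` of `U`. -/
def Mword (U : List R) : Matrix (Fin 2) (Fin 2) R :=
  (U.map fun u => !![0, u; 1, 1]).prod

def foldMonomial (x : ℕ → R) (k : ℕ) : R :=
  ∏ i ∈ Finset.Icc 1 k, x i ^ 2 ^ (k - i)

lemma foldMonomial_succ (x : ℕ → R) (k : ℕ) :
    foldMonomial x (k + 1) = foldMonomial x k ^ 2 * x (k + 1) := by
  rw [foldMonomial, Finset.prod_Icc_succ_top (by omega), Nat.sub_self, pow_zero, pow_one,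
    foldMonomial, ← Finset.prod_pow]
  refine congrArg (· * _) (Finset.prod_congr rfl fun i hi => ?_)
  rw [← pow_mul, ← pow_succ, Nat.sub_add_comm (Finset.mem_Icc.1 hi).2]

lemma Xpoly_zero (x : ℕ → R) : Xpoly x 0 = 1 := by
  simp [Xpoly]

lemma Xpoly_succ (x : ℕ → R) (k : ℕ) :
    Xpoly x (k + 1) = Xpoly x k + foldMonomial x (k + 1) := by
  rw [Xpoly, Finset.sum_Icc_succ_top (by omega), Xpoly, add_assoc, foldMonomial]

lemma Mword_cons (u : R) (U : List R) : Mword (u :: U) = !![0, u; 1, 1] * Mword U := by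
  simp [Mword]

lemma Mword_append (U V : List R) : Mword (U ++ V) = Mword U * Mword V := by
  simp [Mword]

lemma Mword_pair (u v : R) : Mword [u, v] = !![u, u; 1, 1 + v] := by
  ext i j; fin_cases i <;> fin_cases j <;> simp [Mword, add_comm]

lemma Wword_add_two (x : ℕ → R) (k : ℕ) :
    Wword x (k + 2) = Wword x (k + 1) ++ [x (k + 2), -x (k + 2)] ++ (Wword x (k + 1)).reverse :=
  rfl

-- The middle pair is written as `[u, -u]` with `u = -x (k + 2)`, the form that
-- `foldMatrix_mul_Mword_pair_mul` expects.
lemma reverse_Wword_add_two (x : ℕ → R) (k : ℕ) :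
    (Wword x (k + 2)).reverse =
      Wword x (k + 1) ++ [-x (k + 2), -(-x (k + 2))] ++ (Wword x (k + 1)).reverse := by
  simp [Wword_add_two]

def foldMatrix (a p : R) : Matrix (Fin 2) (Fin 2) R :=
  !![a - a ^ 2 - p, 1 - a - p; a ^ 2, a + p]

lemma foldMatrix_mul_Mword_pair_mul (a p u : R) :
    foldMatrix a p * Mword [u, -u] * foldMatrix a (-p) = foldMatrix (a + p) (p ^ 2 * u) := by
  rw [Mword_pair, foldMatrix, foldMatrix, foldMatrix]
  ext i j; fin_cases i <;> fin_cases j <;> simp [Matrix.mul_apply] <;> ring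

lemma Mword_Wword_succ (x : ℕ → R) (k : ℕ) :
    Mword (Wword x (k + 1)) = foldMatrix (Xpoly x k) (foldMonomial x (k + 1)) ∧
    Mword (Wword x (k + 1)).reverse = foldMatrix (Xpoly x k) (-foldMonomial x (k + 1)) := by
  induction k with
  | zero =>
    simp only [Wword, Xpoly_zero, foldMonomial]
    constructor <;> simp [Mword_pair, foldMatrix]
  | succ k ih =>
    rw [reverse_Wword_add_two, Wword_add_two, Mword_append, Mword_append, Mword_append,
      Mword_append, ih.1, ih.2, foldMatrix_mul_Mword_pair_mul, foldMatrix_mul_Mword_pair_mul,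
      ← Xpoly_succ, ← foldMonomial_succ, mul_neg, ← foldMonomial_succ]
    exact ⟨rfl, rfl⟩

/-- The numerator `P_m` and denominator `Q_m` of the convergent, `m = 2(2^k - 1)`, are the
`(0,1)` and `(1,1)` entries of `M(1 :: W_k)`. -/
theorem partial_convergent_eq_Xpoly_general (x : ℕ → R) (k : ℕ) :
    Mword ((1 : R) :: Wword x k) 0 1 = Xpoly x k ∧
    Mword ((1 : R) :: Wword x k) 1 1 = 1 := by
  cases k with
  | zero => simp [Mword, Wword, Xpoly_zero]
  | succ k =>
    rw [Mword_cons, (Mword_Wword_succ x k).1, Xpoly_succ, foldMatrix]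
    constructor <;> simp [Matrix.mul_apply]

/-- The `2(2^k - 1)`-th partial convergent of the continued fraction
`1/(1 + w₁/(1 + w₂/(1 + ⋯)))` whose partial numerators are the letters of the paperfolding
word equals `X_k = 1 + ∑_{j=1}^k ∏_{i=1}^j x_i^{2^(j-i)}`: the convergent is computed by the
standard matrix recursion, its numerator is the `(0,1)` entry and its denominator the `(1,1)`
entry of `M(1 :: W_k)`, and these equal `X_k` and `1` respectively. -/
theorem partial_convergent_eq_Xpoly (x : ℕ → R) (k : ℕ) (hk : 1 ≤ k) :
    Mword ((1 : R) :: Wword x k) 0 1 = Xpoly x k ∧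
    Mword ((1 : R) :: Wword x k) 1 1 = 1 :=
  partial_convergent_eq_Xpoly_general x k
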